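/- arXiv:2209.01093 — 5 statements merged into one kernel-verified Lean document; each statement's English description precedes it below -/
import Mathlib

section
/- Let G be a finite simple graph that is connected, and let H ∈ IIM_1(G) be connected. Then diam(H) ≤ max{diam(G), 5}. -/
/-- Vertex type after `l` IIM steps starting from vertex type `V`:
at each step every existing vertex gets one new copy. -/
def IterV (V : Type) : ℕ → Type
  | 0 => V
  | l + 1 => IterV V l ⊕ IterV V l

instance iterVFintype {V : Type} [Fintype V] : ∀ l, Fintype (IterV V l)
  | 0 => inferInstanceAs (Fintype V)
  | l + 1 =>
    letI := iterVFintype (V := V) l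
    inferInstanceAs (Fintype (IterV V l ⊕ IterV V l))

instance iterVNonempty {V : Type} [Nonempty V] : ∀ l, Nonempty (IterV V l)
  | 0 => inferInstanceAs (Nonempty V)
  | l + 1 =>
    letI := iterVNonempty (V := V) l
    inferInstanceAs (Nonempty (IterV V l ⊕ IterV V l))

/-- One IIM step: each vertex `v` of `G` gets a new copy (`Sum.inr v`), which is a
clone of `v` (joined to the closed neighborhood of `v`) if `σ v = true`, and an
anticlone of `v` (joined to the complement of the closed neighborhood) if `σ v = false`.
Old vertices (`Sum.inl`) keep the edges of `G`; new vertices form an independent set. -/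
def iimStep {V : Type} (G : SimpleGraph V) (σ : V → Bool) : SimpleGraph (V ⊕ V) where
  Adj x y :=
    match x, y with
    | Sum.inl u, Sum.inl v => G.Adj u v
    | Sum.inl u, Sum.inr v =>
        if σ v = true then u = v ∨ G.Adj u v else ¬(u = v ∨ G.Adj u v)
    | Sum.inr u, Sum.inl v =>
        if σ u = true then v = u ∨ G.Adj v u else ¬(v = u ∨ G.Adj v u)
    | Sum.inr _, Sum.inr _ => False
  symm := by
    constructor
    rintro (u | u) (v | v) h
    · exact G.adj_symm h
    · exact h
    · exact h
    · exact h
  loopless := by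
    constructor
    rintro (u | u) h
    · exact G.irrefl h
    · exact h

/-- The IIM graph after `l` steps starting from `G`, where `σ i` records, for each
vertex existing after `i` steps, whether its copy created at step `i+1` is a clone
(`true`) or an anticlone (`false`).  `IIM_l(G)` is exactly the set of graphs of the
form `iimGraph G σ l` as `σ` varies. -/
def iimGraph {V : Type} (G : SimpleGraph V) (σ : ∀ i, IterV V i → Bool) :
    ∀ l, SimpleGraph (IterV V l)
  | 0 => G
  | l + 1 => iimStep (iimGraph G σ l) (σ l)

/-- The level (creation step) of a vertex of an IIM graph. -/
def levelOf {V : Type} : ∀ l, IterV V l → ℕ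
  | 0, _ => 0
  | l + 1, Sum.inl x => levelOf l x
  | l + 1, Sum.inr _ => l + 1

/-- The (level-0) vertex `x` of the initial graph, viewed as a vertex of the IIM graph
after `l` steps. -/
def liftV {V : Type} (x : V) : ∀ l, IterV V l
  | 0 => x
  | l + 1 => Sum.inl (liftV x l)

/-!
Old vertices are at most as far apart as in `G`.  A clone `u'` sees `N[u]`, so stepping from `u'`
to the neighbour of `u` on a geodesic shows `dist u' x ≤ max (dist u x) 1` for old `x`, and
`dist u' v' ≤ max (dist u v) 2` for two clones.  An anticlone `u'` with an old neighbour sees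
some vertex `z` at distance `2` from `u`, and through `z` it reaches every vertex of `N[u]` in at
most `4` steps; every other old vertex is adjacent to `u'`.  A path from an anticlone to any
new vertex `v'` goes through an old neighbour of `v'`, which gives the bound `5`.
-/

open SimpleGraph Sum

namespace SimpleGraph

variable {V : Type*} {G : SimpleGraph V} {u v : V}

lemma Adj.dist_le_dist_add_one (h : G.Adj u v) (w : V) : G.dist u w ≤ G.dist v w + 1 := by
  have := h.reachable.dist_triangle_left w
  rw [dist_eq_one_iff_adj.mpr h] at this
  omega

lemma Connected.dist_le_one_iff (hG : G.Connected) : G.dist u v ≤ 1 ↔ v = u ∨ G.Adj v u := by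
  rw [Nat.le_one_iff_eq_zero_or_eq_one, hG.dist_eq_zero_iff, dist_eq_one_iff_adj, eq_comm,
    G.adj_comm]

lemma Connected.exists_adj_dist_add_one_eq (hG : G.Connected) (huv : u ≠ v) :
    ∃ a, G.Adj u a ∧ G.dist a v + 1 = G.dist u v := by
  obtain ⟨p, hp⟩ := hG.exists_walk_length_eq_dist u v
  cases p with
  | nil => exact absurd rfl huv
  | cons h q =>
    have := dist_le q
    have := h.dist_le_dist_add_one v
    rw [Walk.length_cons] at hp
    exact ⟨_, h, by omega⟩

lemma Connected.exists_dist_eq_of_le_dist (hG : G.Connected) {n : ℕ} (hn : n ≤ G.dist u v) :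
    ∃ z, G.dist u z = n := by
  obtain ⟨k, hk⟩ : ∃ k, G.dist u v = k := ⟨_, rfl⟩
  induction k generalizing v with
  | zero => exact ⟨u, by simp; omega⟩
  | succ k ih =>
    rcases hn.eq_or_lt with rfl | hlt
    · exact ⟨v, rfl⟩
    have hvu : v ≠ u := fun h => by subst h; simp at hk
    obtain ⟨a, -, ha⟩ := hG.exists_adj_dist_add_one_eq hvu
    rw [dist_comm (u := a), dist_comm (u := v), hk] at ha
    exact ih (v := a) (by omega) (by omega)

end SimpleGraph

section IIMStep

variable {V : Type} {G : SimpleGraph V} {b : V → Bool}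

lemma iimStep_adj_inr_inl_of_clone (hG : G.Connected) {u x : V} (hb : b u = true) :
    (iimStep G b).Adj (inr u) (inl x) ↔ G.dist u x ≤ 1 := by
  rw [hG.dist_le_one_iff]
  show (if b u = true then _ else _) ↔ _
  rw [if_pos hb]

lemma iimStep_adj_inr_inl_of_anticlone (hG : G.Connected) {u x : V} (hb : b u = false) :
    (iimStep G b).Adj (inr u) (inl x) ↔ 1 < G.dist u x := by
  rw [← not_le, hG.dist_le_one_iff]
  show (if b u = true then _ else _) ↔ _
  rw [if_neg (by simp [hb])]

lemma iimStep_exists_adj_inr_inl (hH : (iimStep G b).Connected) (u : V) :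
    ∃ y, (iimStep G b).Adj (inr u) (inl y) := by
  have : Nontrivial (V ⊕ V) := ⟨⟨inl u, inr u, inl_ne_inr⟩⟩
  obtain ⟨y | y, hy⟩ := hH.preconnected.exists_adj_of_nontrivial (inr u)
  · exact ⟨y, hy⟩
  · exact hy.elim

lemma iimStep_dist_inl_inl_le (hG : G.Connected) (u x : V) :
    (iimStep G b).dist (inl u) (inl x) ≤ G.dist u x := by
  obtain ⟨p, hp⟩ := hG.exists_walk_length_eq_dist u x
  let f : G →g iimStep G b := ⟨inl, id⟩
  calc (iimStep G b).dist (inl u) (inl x) ≤ (p.map f).length := dist_le _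
    _ = G.dist u x := by rw [Walk.length_map, hp]

lemma iimStep_dist_inr_inl_le_of_clone (hG : G.Connected) {u : V} (hb : b u = true) (x : V) :
    (iimStep G b).dist (inr u) (inl x) ≤ max (G.dist u x) 1 := by
  by_cases hux : u = x
  · subst hux
    have h : (iimStep G b).Adj (inr u) (inl u) := by
      simp [iimStep_adj_inr_inl_of_clone hG hb]
    simp [dist_eq_one_iff_adj.mpr h]
  obtain ⟨a, hua, ha⟩ := hG.exists_adj_dist_add_one_eq hux
  have h : (iimStep G b).Adj (inr u) (inl a) := by
    simp [iimStep_adj_inr_inl_of_clone hG hb, dist_eq_one_iff_adj.mpr hua]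
  have := h.dist_le_dist_add_one (inl x)
  have := iimStep_dist_inl_inl_le (b := b) hG a x
  omega

lemma iimStep_dist_inr_inl_le_of_anticlone (hG : G.Connected) (hH : (iimStep G b).Connected)
    {u : V} (hb : b u = false) (x : V) :
    (iimStep G b).dist (inr u) (inl x) ≤ 4 := by
  by_cases hux : 1 < G.dist u x
  · rw [dist_eq_one_iff_adj.mpr ((iimStep_adj_inr_inl_of_anticlone hG hb).mpr hux)]
    omega
  obtain ⟨y, hy⟩ := iimStep_exists_adj_inr_inl hH u
  rw [iimStep_adj_inr_inl_of_anticlone hG hb] at hy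
  obtain ⟨z, hz⟩ := hG.exists_dist_eq_of_le_dist (n := 2) hy
  have h : (iimStep G b).Adj (inr u) (inl z) :=
    (iimStep_adj_inr_inl_of_anticlone hG hb).mpr (by omega)
  have := h.dist_le_dist_add_one (inl x)
  have := iimStep_dist_inl_inl_le (b := b) hG z x
  have := hG.dist_triangle (u := z) (v := u) (w := x)
  rw [dist_comm (u := z) (v := u), hz] at this
  omega

lemma iimStep_dist_inr_inr_le_of_clone (hG : G.Connected) {u v : V} (hu : b u = true)
    (hv : b v = true) : (iimStep G b).dist (inr u) (inr v) ≤ max (G.dist u v) 2 := by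
  by_cases huv : u = v
  · simp [huv]
  obtain ⟨a, hua, ha⟩ := hG.exists_adj_dist_add_one_eq huv
  have h : (iimStep G b).Adj (inr u) (inl a) := by
    simp [iimStep_adj_inr_inl_of_clone hG hu, dist_eq_one_iff_adj.mpr hua]
  have := h.dist_le_dist_add_one (inr v)
  have := iimStep_dist_inr_inl_le_of_clone hG hv a
  rw [dist_comm (u := inl a), dist_comm (u := v)] at *
  omega

lemma iimStep_dist_inr_inr_le_of_anticlone (hG : G.Connected) (hH : (iimStep G b).Connected)
    {u : V} (hb : b u = false) (v : V) : (iimStep G b).dist (inr u) (inr v) ≤ 5 := by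
  obtain ⟨t, ht⟩ := iimStep_exists_adj_inr_inl hH v
  have := ht.dist_le_dist_add_one (inr u)
  have := iimStep_dist_inr_inl_le_of_anticlone hG hH hb t
  rw [dist_comm (u := inr v), dist_comm (u := inl t)] at *
  omega

lemma iimStep_dist_inr_inl_le (hG : G.Connected) (hH : (iimStep G b).Connected) (u x : V) :
    (iimStep G b).dist (inr u) (inl x) ≤ max (G.dist u x) 4 := by
  cases hb : b u with
  | true => exact (iimStep_dist_inr_inl_le_of_clone hG hb x).trans (by omega)
  | false => exact (iimStep_dist_inr_inl_le_of_anticlone hG hH hb x).trans (le_max_right _ _)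

lemma iimStep_dist_inr_inr_le (hG : G.Connected) (hH : (iimStep G b).Connected) (u v : V) :
    (iimStep G b).dist (inr u) (inr v) ≤ max (G.dist u v) 5 := by
  cases hu : b u with
  | false => exact (iimStep_dist_inr_inr_le_of_anticlone hG hH hu v).trans (le_max_right _ _)
  | true =>
    cases hv : b v with
    | false =>
      rw [dist_comm]
      exact (iimStep_dist_inr_inr_le_of_anticlone hG hH hv u).trans (le_max_right _ _)
    | true => exact (iimStep_dist_inr_inr_le_of_clone hG hu hv).trans (by omega)

lemma iimStep_diam_le [Finite V] (hG : G.Connected) (hH : (iimStep G b).Connected) :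
    (iimStep G b).diam ≤ max G.diam 5 := by
  have : Nonempty V := hG.nonempty
  have hGd (u v : V) : G.dist u v ≤ G.diam := dist_le_diam (connected_iff_ediam_ne_top.mp hG)
  obtain ⟨x, y, hxy⟩ := (iimStep G b).exists_dist_eq_diam
  rw [← hxy]
  rcases x with u | u <;> rcases y with v | v
  · exact (iimStep_dist_inl_inl_le hG u v).trans ((hGd u v).trans (le_max_left _ _))
  · rw [dist_comm]
    exact (iimStep_dist_inr_inl_le hG hH v u).trans (max_le_max (hGd v u) (by omega))
  · exact (iimStep_dist_inr_inl_le hG hH u v).trans (max_le_max (hGd u v) (by omega))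
  · exact (iimStep_dist_inr_inr_le hG hH u v).trans (max_le_max (hGd u v) le_rfl)

end IIMStep

/-- If `G` is a connected finite graph and `H ∈ IIM_1(G)` is connected,
then `diam(H) ≤ max {diam(G), 5}`. -/
theorem stmt2 {V : Type} [Fintype V] (G : SimpleGraph V) (hG : G.Connected)
    (σ : ∀ i, IterV V i → Bool) (hH : (iimGraph G σ 1).Connected) :
    (iimGraph G σ 1).diam ≤ max G.diam 5 :=
  iimStep_diam_le hG hH
end

section
/- For any finite simple graph G, any l ∈ ℕ, and any connected H ∈ IIM_l(G), we have diam(H) ≤ max{diam(G), 6} (where if G is disconnected the bound is simply diam(H) ≤ 6). -/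
/-
If some vertex `v` receives an anticlone `v'`, the diameter collapses: `v` is adjacent to the
closed neighbourhood `N[v]` and `v'` to its complement `B`, and connectivity forces a short link
between the two sides (an edge of `G` from `N[v]` to `B`, or an anticlone adjacent to both), so
every vertex of `B` lies within distance `4` of `v`. If a neighbour of `v` dominates `B`, every
vertex is within `3` of `v`; otherwise every vertex lies within `1` of `v` or of `B`, and
`B ∪ {v'}` has diameter `2`. Either way the diameter is at most `6`. If every new vertex is a
clone, connectivity projects back to `G` and shortest paths of `G` lift, giving
`diam ≤ max (diam G) 2`; induction on the number of steps concludes.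
-/

open SimpleGraph

namespace SimpleGraph

variable {α : Type*} {A : SimpleGraph α} {a b c : α}

lemma Adj.edist_le_one (h : A.Adj a b) : A.edist a b ≤ 1 :=
  edist_le_one_iff_adj_or_eq.mpr (.inl h)

lemma edist_le_add_of_le_of_le {m n : ℕ∞} (hab : A.edist a b ≤ m) (hbc : A.edist b c ≤ n) :
    A.edist a c ≤ m + n :=
  A.edist_triangle.trans (add_le_add hab hbc)

lemma diam_le_of_forall_edist_le {k : ℕ} (h : ∀ a b, A.edist a b ≤ k) : A.diam ≤ k :=
  ENat.toNat_le_of_le_natCast (ediam_le_of_edist_le h)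

lemma Connected.dist_le_diam [Finite α] (hA : A.Connected) : A.dist a b ≤ A.diam :=
  haveI := hA.nonempty
  SimpleGraph.dist_le_diam (connected_iff_ediam_ne_top.mp hA)

end SimpleGraph

section iimStep

variable {W : Type} {G : SimpleGraph W} {σ : W → Bool} {u v w : W}

-- `u = v ∨ G.Adj u v` says `u ∈ N[v]`; the copy of `v` created by the step is `.inr v`.

lemma iimStep_adj_inl_inl : (iimStep G σ).Adj (.inl u) (.inl w) ↔ G.Adj u w := Iff.rfl

lemma iimStep_adj_inl_inr_of_clone (hw : σ w = true) :
    (iimStep G σ).Adj (.inl u) (.inr w) ↔ u = w ∨ G.Adj u w := by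
  simp [iimStep, hw]

lemma iimStep_adj_inl_inr_of_anticlone (hw : σ w = false) :
    (iimStep G σ).Adj (.inl u) (.inr w) ↔ ¬(u = w ∨ G.Adj u w) := by
  simp [iimStep, hw]

lemma iimStep_not_adj_inr_inr : ¬(iimStep G σ).Adj (.inr u) (.inr w) := id

lemma iimStep_edist_inl_inl_le_one (h : u = w ∨ G.Adj u w) :
    (iimStep G σ).edist (.inl w) (.inl u) ≤ 1 := by
  rcases h with rfl | h
  · simp
  · exact (iimStep_adj_inl_inl.mpr h.symm).edist_le_one

lemma iimStep_exists_adj_inr (hH : (iimStep G σ).Preconnected) (w : W) :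
    ∃ u, (iimStep G σ).Adj (.inl u) (.inr w) := by
  obtain ⟨p⟩ := hH (.inr w) (.inl w)
  have hadj := p.adj_snd (p.not_nil_of_ne Sum.inr_ne_inl)
  rcases hsnd : p.snd with u | u <;> rw [hsnd] at hadj
  · exact ⟨u, hadj.symm⟩
  · exact absurd hadj iimStep_not_adj_inr_inr

lemma iimStep_exists_notMem_closedNbhd_of_anticlone (hH : (iimStep G σ).Preconnected)
    (hv : σ v = false) : ∃ b, ¬(b = v ∨ G.Adj b v) := by
  obtain ⟨b, hb⟩ := iimStep_exists_adj_inr hH v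
  exact ⟨b, (iimStep_adj_inl_inr_of_anticlone hv).mp hb⟩

/-- Some `a ∈ N[v]` and `c ∉ N[v]` are joined by an edge of `G` or have the anticlone of some `m`
as a common neighbour. -/
lemma iimStep_exists_bridge_of_anticlone (hH : (iimStep G σ).Preconnected) (hv : σ v = false) :
    ∃ a c, (a = v ∨ G.Adj a v) ∧ ¬(c = v ∨ G.Adj c v) ∧
      (G.Adj a c ∨ ∃ m, σ m = false ∧ ¬(a = m ∨ G.Adj a m) ∧ ¬(c = m ∨ G.Adj c m)) := by
  obtain ⟨b, hb⟩ := iimStep_exists_notMem_closedNbhd_of_anticlone hH hv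
  let S : Set (W ⊕ W) := {x | x.elim (fun u ↦ u = v ∨ G.Adj u v)
    (fun m ↦ ∃ a, (a = v ∨ G.Adj a v) ∧ (iimStep G σ).Adj (.inl a) (.inr m))}
  obtain ⟨p⟩ := hH (.inl v) (.inl b)
  obtain ⟨⟨⟨x, y⟩, hxy⟩, -, hx, hy⟩ := p.exists_boundary_dart S (Or.inl rfl) hb
  rcases x with a | m <;> rcases y with c | m'
  · exact ⟨a, c, hx, hy, .inl hxy⟩
  · exact absurd ⟨a, hx, hxy⟩ hy
  · obtain ⟨a, ha, ham⟩ := hx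
    have hcm := hxy.symm
    cases hm : σ m
    · rw [iimStep_adj_inl_inr_of_anticlone hm] at ham hcm
      exact ⟨a, c, ha, hy, .inr ⟨m, hm, ham, hcm⟩⟩
    · rw [iimStep_adj_inl_inr_of_clone hm] at ham hcm
      by_cases hmv : m = v ∨ G.Adj m v
      · rcases hcm with rfl | hcm
        · exact absurd hmv hy
        · exact ⟨m, c, hmv, hy, .inl hcm.symm⟩
      · rcases ham with rfl | ham
        · exact absurd ha hmv
        · exact ⟨a, m, ha, hmv, .inl ham⟩
  · exact absurd hxy iimStep_not_adj_inr_inr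

lemma iimStep_edist_inl_le_four_of_anticlone (hH : (iimStep G σ).Preconnected)
    (hv : σ v = false) (hu : ¬(u = v ∨ G.Adj u v)) :
    (iimStep G σ).edist (.inl v) (.inl u) ≤ 4 := by
  obtain ⟨a, c, ha, hc, hbridge⟩ := iimStep_exists_bridge_of_anticlone hH hv
  have hcv : (iimStep G σ).Adj (.inl c) (.inr v) := (iimStep_adj_inl_inr_of_anticlone hv).mpr hc
  have hvu : (iimStep G σ).Adj (.inr v) (.inl u) :=
    ((iimStep_adj_inl_inr_of_anticlone hv).mpr hu).symm
  have hcu : (iimStep G σ).edist (.inl c) (.inl u) ≤ 2 :=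
    (edist_le_add_of_le_of_le hcv.edist_le_one hvu.edist_le_one).trans (by norm_num)
  rcases hbridge with hac | ⟨m, hm, ham, hcm⟩
  · exact (edist_le_add_of_le_of_le (iimStep_edist_inl_inl_le_one ha)
      (edist_le_add_of_le_of_le (iimStep_adj_inl_inl.mpr hac).edist_le_one hcu)).trans
      (by norm_num)
  have hmc : (iimStep G σ).Adj (.inr m) (.inl c) :=
    ((iimStep_adj_inl_inr_of_anticlone hm).mpr hcm).symm
  by_cases hum : u = m ∨ G.Adj u m
  · by_cases hvm : v = m ∨ G.Adj v m
    · have hvm' := iimStep_edist_inl_inl_le_one (σ := σ) hvm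
      rw [edist_comm] at hvm'
      exact (edist_le_add_of_le_of_le hvm' (iimStep_edist_inl_inl_le_one hum)).trans (by norm_num)
    · have hvm' : (iimStep G σ).Adj (.inl v) (.inr m) :=
        (iimStep_adj_inl_inr_of_anticlone hm).mpr hvm
      exact (edist_le_add_of_le_of_le hvm'.edist_le_one
        (edist_le_add_of_le_of_le hmc.edist_le_one hcu)).trans (by norm_num)
  · have ham' : (iimStep G σ).Adj (.inl a) (.inr m) :=
      (iimStep_adj_inl_inr_of_anticlone hm).mpr ham
    have hmu : (iimStep G σ).Adj (.inr m) (.inl u) :=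
      ((iimStep_adj_inl_inr_of_anticlone hm).mpr hum).symm
    exact (edist_le_add_of_le_of_le (iimStep_edist_inl_inl_le_one ha)
      (edist_le_add_of_le_of_le ham'.edist_le_one hmu.edist_le_one)).trans (by norm_num)

lemma iimStep_edist_inl_le_three_of_dominating (hH : (iimStep G σ).Preconnected)
    (hvw : G.Adj v w) (hw : ∀ c, ¬(c = v ∨ G.Adj c v) → G.Adj c w) (x : W ⊕ W) :
    (iimStep G σ).edist (.inl v) x ≤ 3 := by
  have hold : ∀ u, (iimStep G σ).edist (.inl v) (.inl u) ≤ 2 := fun u ↦ by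
    by_cases hu : u = v ∨ G.Adj u v
    · exact (iimStep_edist_inl_inl_le_one hu).trans (by norm_num)
    · exact edist_le_add_of_le_of_le (iimStep_adj_inl_inl.mpr hvw).edist_le_one
        (iimStep_adj_inl_inl.mpr (hw u hu).symm).edist_le_one
  rcases x with u | m
  · exact (hold u).trans (by norm_num)
  · obtain ⟨u, hum⟩ := iimStep_exists_adj_inr hH m
    exact edist_le_add_of_le_of_le (hold u) hum.edist_le_one

/-- A new vertex with no neighbour outside `N[v]` is adjacent to `v`, unless it is the anticlone of
a neighbour of `v` adjacent to everything outside `N[v]`. -/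
lemma iimStep_edist_le_one_or_of_anticlone (hv : σ v = false) (hb : ¬(b = v ∨ G.Adj b v))
    (hdom : ¬∃ w, G.Adj v w ∧ ∀ c, ¬(c = v ∨ G.Adj c v) → G.Adj c w) (x : W ⊕ W) :
    (iimStep G σ).edist (.inl v) x ≤ 1 ∨
      ∃ c, ¬(c = v ∨ G.Adj c v) ∧ (iimStep G σ).edist (.inl c) x ≤ 1 := by
  rcases x with u | m
  · by_cases hu : u = v ∨ G.Adj u v
    · exact .inl (iimStep_edist_inl_inl_le_one hu)
    · exact .inr ⟨u, hu, by simp⟩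
  by_cases hB : ∃ c, ¬(c = v ∨ G.Adj c v) ∧ (iimStep G σ).Adj (.inl c) (.inr m)
  · obtain ⟨c, hc, hcm⟩ := hB
    exact .inr ⟨c, hc, hcm.edist_le_one⟩
  simp only [not_exists, not_and] at hB
  refine .inl (Adj.edist_le_one ?_)
  cases hm : σ m
  · rw [iimStep_adj_inl_inr_of_anticlone hm]
    rintro (rfl | hvm)
    · exact hB b hb ((iimStep_adj_inl_inr_of_anticlone hm).mpr hb)
    refine hdom ⟨m, hvm, fun c hc ↦ ?_⟩
    have hcm := hB c hc
    rw [iimStep_adj_inl_inr_of_anticlone hm, not_not] at hcm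
    rcases hcm with rfl | hcm
    · exact absurd (.inr hvm.symm) hc
    · exact hcm
  · rw [iimStep_adj_inl_inr_of_clone hm]
    have hmv : m = v ∨ G.Adj m v :=
      not_not.mp fun h ↦ hB m h ((iimStep_adj_inl_inr_of_clone hm).mpr (.inl rfl))
    rcases hmv with rfl | hmv
    · exact .inl rfl
    · exact .inr hmv.symm

lemma iimStep_ediam_le_six_of_anticlone (hH : (iimStep G σ).Preconnected) (hv : σ v = false) :
    (iimStep G σ).ediam ≤ 6 := by
  by_cases hdom : ∃ w, G.Adj v w ∧ ∀ c, ¬(c = v ∨ G.Adj c v) → G.Adj c w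
  · obtain ⟨w, hvw, hw⟩ := hdom
    have hecc : (iimStep G σ).eccent (.inl v) ≤ 3 :=
      (eccent_le_iff _ _).mpr (iimStep_edist_inl_le_three_of_dominating hH hvw hw)
    exact (ediam_le_two_mul_eccent _).trans ((mul_le_mul_right hecc 2).trans (by norm_num))
  obtain ⟨b, hb⟩ := iimStep_exists_notMem_closedNbhd_of_anticlone hH hv
  have hv_le : ∀ {c} {z : W ⊕ W}, ¬(c = v ∨ G.Adj c v) → (iimStep G σ).edist (.inl c) z ≤ 1 →
      (iimStep G σ).edist (.inl v) z ≤ 5 := fun hc hz ↦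
    edist_le_add_of_le_of_le (iimStep_edist_inl_le_four_of_anticlone hH hv hc) hz
  have hv'_le : ∀ {c} {z : W ⊕ W}, ¬(c = v ∨ G.Adj c v) → (iimStep G σ).edist (.inl c) z ≤ 1 →
      (iimStep G σ).edist (.inr v) z ≤ 2 := fun hc hz ↦
    edist_le_add_of_le_of_le ((iimStep_adj_inl_inr_of_anticlone hv).mpr hc).symm.edist_le_one hz
  refine ediam_le_of_edist_le fun x y ↦ ?_
  have hvia : ∀ z, (iimStep G σ).edist x y ≤ (iimStep G σ).edist z x + (iimStep G σ).edist z y :=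
    fun z ↦ by rw [edist_comm (u := z)]; exact SimpleGraph.edist_triangle
  have hnear := iimStep_edist_le_one_or_of_anticlone hv hb hdom
  rcases hnear x with hx | ⟨c, hc, hx⟩ <;> rcases hnear y with hy | ⟨c', hc', hy⟩
  · exact (hvia _).trans ((add_le_add hx hy).trans (by norm_num))
  · exact (hvia _).trans ((add_le_add hx (hv_le hc' hy)).trans (by norm_num))
  · exact (hvia _).trans ((add_le_add (hv_le hc hx) hy).trans (by norm_num))
  · exact (hvia _).trans ((add_le_add (hv'_le hc hx) (hv'_le hc' hy)).trans (by norm_num))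

lemma iimStep_edist_inl_le_one_of_clone (hσ : ∀ u, σ u = true) {x : W ⊕ W}
    (hu : u = x.elim id id ∨ G.Adj u (x.elim id id)) : (iimStep G σ).edist x (.inl u) ≤ 1 := by
  rcases x with w | w
  · exact iimStep_edist_inl_inl_le_one hu
  · exact ((iimStep_adj_inl_inr_of_clone (hσ w)).mpr hu).symm.edist_le_one

lemma iimStep_edist_inl_le_of_clone (hσ : ∀ u, σ u = true) (p : G.Walk u w) {y : W ⊕ W}
    (hy : y.elim id id = w) : (iimStep G σ).edist (.inl u) y ≤ (max p.length 1 : ℕ) := by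
  induction p with
  | nil =>
    rw [edist_comm]
    exact (iimStep_edist_inl_le_one_of_clone hσ (.inl hy.symm)).trans (by simp)
  | cons huc q ih =>
    cases q with
    | nil =>
      rw [edist_comm]
      exact (iimStep_edist_inl_le_one_of_clone hσ (.inr (hy ▸ huc))).trans (by simp)
    | cons hcd q =>
      refine (edist_le_add_of_le_of_le (iimStep_adj_inl_inl.mpr huc).edist_le_one (ih hy)).trans ?_
      simp only [Walk.length_cons]
      norm_cast
      omega

lemma iimStep_edist_le_of_clone (hσ : ∀ u, σ u = true) (p : G.Walk u w) {x y : W ⊕ W}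
    (hx : x.elim id id = u) (hy : y.elim id id = w) :
    (iimStep G σ).edist x y ≤ (max p.length 2 : ℕ) := by
  cases p with
  | nil =>
    have hx' := iimStep_edist_inl_le_one_of_clone (G := G) hσ (.inl hx.symm)
    have hy' := iimStep_edist_inl_le_one_of_clone (G := G) hσ (.inl hy.symm)
    rw [edist_comm] at hy'
    exact (edist_le_add_of_le_of_le hx' hy').trans (by norm_num)
  | cons huc q =>
    have hx' := iimStep_edist_inl_le_one_of_clone hσ (.inr (hx ▸ huc.symm))
    refine (edist_le_add_of_le_of_le hx' (iimStep_edist_inl_le_of_clone hσ q hy)).trans ?_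
    simp only [Walk.length_cons]
    norm_cast
    omega

lemma iimStep_connected_of_clone (hσ : ∀ u, σ u = true) (hH : (iimStep G σ).Connected) :
    G.Connected := by
  have hproj : ∀ x y, (iimStep G σ).Adj x y → G.Reachable (x.elim id id) (y.elim id id) := by
    rintro (u | u) (w | w) h
    · exact (iimStep_adj_inl_inl.mp h).reachable
    · rcases (iimStep_adj_inl_inr_of_clone (hσ w)).mp h with rfl | h
      exacts [.rfl, h.reachable]
    · rcases (iimStep_adj_inl_inr_of_clone (hσ u)).mp h.symm with rfl | h
      exacts [.rfl, h.symm.reachable]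
    · exact absurd h iimStep_not_adj_inr_inr
  obtain ⟨x⟩ := hH.nonempty
  refine (connected_iff G).mpr ⟨fun u w ↦ ?_, ⟨x.elim id id⟩⟩
  have huw := hH (.inl u) (.inl w)
  rw [reachable_eq_reflTransGen] at hproj huw ⊢
  exact Relation.ReflTransGen.lift' (Sum.elim id id) hproj _ _ huw

lemma iimStep_diam_le_of_clone [Finite W] (hσ : ∀ u, σ u = true) (hG : G.Connected) :
    (iimStep G σ).diam ≤ max G.diam 2 :=
  diam_le_of_forall_edist_le fun x y ↦ by
    obtain ⟨p, hp⟩ := hG.exists_walk_length_eq_dist (x.elim id id) (y.elim id id)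
    refine (iimStep_edist_le_of_clone hσ p rfl rfl).trans ?_
    exact_mod_cast max_le_max (hp ▸ hG.dist_le_diam) le_rfl

end iimStep

/-- For any finite graph `G`, any `l ∈ ℕ`, and any connected
`H ∈ IIM_l(G)`, `diam(H) ≤ max {diam(G), 6}`.  (For disconnected `G`, Mathlib's
convention gives `G.diam = 0`, so the bound reads `diam(H) ≤ 6`.) -/
theorem stmt4 {V : Type} [Fintype V] (G : SimpleGraph V) (l : ℕ)
    (σ : ∀ i, IterV V i → Bool) (hH : (iimGraph G σ l).Connected) :
    (iimGraph G σ l).diam ≤ max G.diam 6 := by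
  induction l with
  | zero => exact le_max_left _ _
  | succ l ih =>
    by_cases hclone : ∀ u, σ l u = true
    · have hGl := iimStep_connected_of_clone hclone hH
      exact (iimStep_diam_le_of_clone hclone hGl).trans (max_le (ih hGl) (by omega))
    · obtain ⟨v, hv⟩ := not_forall.mp hclone
      exact (ENat.toNat_le_of_le_natCast (iimStep_ediam_le_six_of_anticlone hH.preconnected
        (Bool.eq_false_iff.mpr hv))).trans (le_max_right _ _)
end

section
/- Let G be a finite simple graph with dom(G) ≥ 2, and define b(G) = min { |N_G(u) ∩ N_G(v)| : u, v ∈ V(G), u ≠ v, uv ∉ E(G) } (this minimum is over a nonempty set since dom(G) ≥ 2). Then for every i ∈ ℕ and every H ∈ IIM_i(G), dom(H) ≤ dom(G) + b(G) + 3. -/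
/-- `D` is a dominating set of `H`: every vertex lies in `D` or is adjacent to a
vertex of `D`. -/
def IsDominating {W : Type} (H : SimpleGraph W) (D : Set W) : Prop :=
  ∀ v : W, v ∈ D ∨ ∃ u ∈ D, H.Adj u v

/-- The domination number of `H`: the least size of a dominating set. -/
noncomputable def domNum {W : Type} (H : SimpleGraph W) : ℕ :=
  sInf {n | ∃ D : Set W, IsDominating H D ∧ D.ncard = n}

/-- `D` is a dual dominating set of `H`: a dominating set such that moreover every
vertex `v` has some `w ∈ D` with `w ∉ N[v]` (i.e. `w ≠ v` and `w` not adjacent to `v`). -/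
def IsDualDominating {W : Type} (H : SimpleGraph W) (D : Set W) : Prop :=
  IsDominating H D ∧ ∀ v : W, ∃ w ∈ D, w ≠ v ∧ ¬ H.Adj w v

/-! A dual dominating set meets both the closed neighborhood `N[v]` of every vertex and its
complement. Since the copy of `v` made by an IIM step is joined to exactly one of these two
sets, a dual dominating set of `G` stays dual dominating in every graph of `IIM_l(G)`. In `G`
itself one is obtained from a minimum dominating set `A` and a non-adjacent pair `u, v` with
`|N(u) ∩ N(v)| = b(G)`: the vertices not met outside their closed neighborhood by `A ∪ {u, v}`
lie in `N(u) ∩ N(v)`, and for each of them one non-neighbor is added. -/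

section Domination

variable {W : Type} (H : SimpleGraph W)

lemma domNum_le_ncard {D : Set W} (hD : IsDominating H D) : domNum H ≤ D.ncard :=
  Nat.sInf_le ⟨D, hD, rfl⟩

lemma exists_isDominating_ncard_eq_domNum : ∃ D, IsDominating H D ∧ D.ncard = domNum H := by
  have hne : {n | ∃ D : Set W, IsDominating H D ∧ D.ncard = n}.Nonempty :=
    ⟨_, Set.univ, fun v => Or.inl (Set.mem_univ v), rfl⟩
  exact Nat.sInf_mem hne

lemma nonempty_of_two_le_domNum (h : 2 ≤ domNum H) : Nonempty W := by
  by_contra hW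
  have := domNum_le_ncard H (D := ∅) fun v => (hW ⟨v⟩).elim
  simp only [Set.ncard_empty] at this
  omega

lemma exists_ne_not_adj_of_two_le_domNum (h : 2 ≤ domNum H) (x : W) :
    ∃ y, y ≠ x ∧ ¬ H.Adj y x := by
  by_contra! hx
  have hdom : IsDominating H {x} := fun v =>
    (em (v = x)).imp id fun hv => ⟨x, rfl, H.adj_symm (hx v hv)⟩
  have := domNum_le_ncard H hdom
  rw [Set.ncard_singleton] at this
  omega

lemma IsDualDominating.exists_mem_iff_mem_closedNbhd {D : Set W} (hD : IsDualDominating H D)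
    (v : W) (p : Bool) : ∃ u ∈ D, (p = true ↔ u = v ∨ H.Adj u v) := by
  cases p
  · obtain ⟨w, hw, hwv, hnadj⟩ := hD.2 v
    exact ⟨w, hw, by simp [hwv, hnadj]⟩
  · rcases hD.1 v with hv | ⟨u, hu, hadj⟩
    · exact ⟨v, hv, by simp⟩
    · exact ⟨u, hu, by simp [hadj]⟩

lemma isDualDominating_union_pair_union_image {A : Set W} (hA : IsDominating H A) {u v : W}
    (huv : u ≠ v) (hnadj : ¬ H.Adj u v) {f : W → W} (hf : ∀ w, f w ≠ w ∧ ¬ H.Adj (f w) w) :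
    IsDualDominating H (A ∪ {u, v} ∪ f '' (H.neighborSet u ∩ H.neighborSet v)) := by
  refine ⟨fun w => ?_, fun w => ?_⟩
  · rcases hA w with hw | ⟨a, ha, hadj⟩
    · exact Or.inl (Or.inl (Or.inl hw))
    · exact Or.inr ⟨a, Or.inl (Or.inl ha), hadj⟩
  by_cases hu : u ≠ w ∧ ¬ H.Adj u w
  · exact ⟨u, Or.inl (Or.inr (Or.inl rfl)), hu⟩
  by_cases hv : v ≠ w ∧ ¬ H.Adj v w
  · exact ⟨v, Or.inl (Or.inr (Or.inr rfl)), hv⟩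
  have hwu : w ≠ u := by
    rintro rfl
    exact hv ⟨huv.symm, fun h => hnadj (H.adj_symm h)⟩
  have hwv : w ≠ v := by
    rintro rfl
    exact hu ⟨huv, hnadj⟩
  have hw : w ∈ H.neighborSet u ∩ H.neighborSet v :=
    ⟨of_not_not fun h => hu ⟨hwu.symm, h⟩, of_not_not fun h => hv ⟨hwv.symm, h⟩⟩
  exact ⟨f w, Or.inr ⟨w, hw, rfl⟩, hf w⟩

end Domination

section IIM

lemma iimStep_adj_inl_inr {W : Type} (H : SimpleGraph W) (τ : W → Bool) (u v : W) :
    (iimStep H τ).Adj (Sum.inl u) (Sum.inr v) ↔ (τ v = true ↔ u = v ∨ H.Adj u v) := by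
  change (if τ v = true then _ else _) ↔ _
  cases τ v <;> simp

lemma IsDualDominating.iimStep {W : Type} {H : SimpleGraph W} {D : Set W}
    (hD : IsDualDominating H D) (τ : W → Bool) :
    IsDualDominating (iimStep H τ) (Sum.inl '' D) := by
  refine ⟨?_, ?_⟩
  · rintro (v | v)
    · rcases hD.1 v with hv | ⟨u, hu, hadj⟩
      · exact Or.inl ⟨v, hv, rfl⟩
      · exact Or.inr ⟨Sum.inl u, ⟨u, hu, rfl⟩, hadj⟩
    · obtain ⟨u, hu, hiff⟩ := hD.exists_mem_iff_mem_closedNbhd H v (τ v)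
      exact Or.inr ⟨Sum.inl u, ⟨u, hu, rfl⟩, (iimStep_adj_inl_inr H τ u v).2 hiff⟩
  · rintro (v | v)
    · obtain ⟨w, hw, hwv, hnadj⟩ := hD.2 v
      exact ⟨Sum.inl w, ⟨w, hw, rfl⟩, Sum.inl_injective.ne hwv, hnadj⟩
    · obtain ⟨u, hu, hiff⟩ := hD.exists_mem_iff_mem_closedNbhd H v (!τ v)
      refine ⟨Sum.inl u, ⟨u, hu, rfl⟩, Sum.inl_ne_inr, fun hadj => ?_⟩
      rw [iimStep_adj_inl_inr, ← hiff] at hadj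
      cases τ v <;> simp at hadj

variable {V : Type} (G : SimpleGraph V) (σ : ∀ i, IterV V i → Bool)

lemma liftV_injective : ∀ l, Function.Injective (fun x : V => liftV x l)
  | 0 => fun _ _ h => h
  | l + 1 => fun _ _ h => liftV_injective l (Sum.inl.inj h)

lemma IsDualDominating.iimGraph {D : Set V} (hD : IsDualDominating G D) :
    ∀ l, IsDualDominating (iimGraph G σ l) ((fun x => liftV x l) '' D)
  | 0 => by
    change IsDualDominating G (id '' D)
    rwa [Set.image_id]
  | l + 1 => by
    rw [show (fun x => liftV x (l + 1)) '' D = Sum.inl '' ((fun x => liftV x l) '' D) from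
      (Set.image_image ..).symm]
    exact (hD.iimGraph l).iimStep (σ l)

lemma domNum_iimGraph_le_ncard {D : Set V} (hD : IsDualDominating G D) (l : ℕ) :
    domNum (iimGraph G σ l) ≤ D.ncard := by
  rw [← Set.ncard_image_of_injective D (liftV_injective l)]
  exact domNum_le_ncard _ (hD.iimGraph G σ l).1

end IIM

/-- Let `G` be a finite graph with `dom(G) ≥ 2` and let
`b(G) = min {|N_G(u) ∩ N_G(v)| : u ≠ v, uv ∉ E(G)}`.  Then for every `i ∈ ℕ` and every
`H ∈ IIM_i(G)`, `dom(H) ≤ dom(G) + b(G) + 3`. -/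
theorem stmt10 {V : Type} [Fintype V] (G : SimpleGraph V)
    (hdom : 2 ≤ domNum G)
    (b : ℕ)
    (hb : b = sInf {k | ∃ u v : V, u ≠ v ∧ ¬ G.Adj u v ∧
      (G.neighborSet u ∩ G.neighborSet v).ncard = k})
    (i : ℕ) (σ : ∀ j, IterV V j → Bool) :
    domNum (iimGraph G σ i) ≤ domNum G + b + 3 := by
  obtain ⟨A, hA, hAcard⟩ := exists_isDominating_ncard_eq_domNum G
  choose f hf using exists_ne_not_adj_of_two_le_domNum G hdom
  obtain ⟨x⟩ := nonempty_of_two_le_domNum G hdom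
  have hne : {k | ∃ u v : V, u ≠ v ∧ ¬ G.Adj u v ∧
      (G.neighborSet u ∩ G.neighborSet v).ncard = k}.Nonempty :=
    ⟨_, f x, x, (hf x).1, (hf x).2, rfl⟩
  obtain ⟨u, v, huv, hnadj, hS⟩ := hb ▸ Nat.sInf_mem hne
  calc domNum (iimGraph G σ i)
      ≤ (A ∪ {u, v} ∪ f '' (G.neighborSet u ∩ G.neighborSet v)).ncard :=
        domNum_iimGraph_le_ncard G σ (isDualDominating_union_pair_union_image G hA huv hnadj hf) i
    _ ≤ (A.ncard + 2) + (G.neighborSet u ∩ G.neighborSet v).ncard :=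
        (Set.ncard_union_le _ _).trans <| add_le_add
          ((Set.ncard_union_le _ _).trans (by rw [Set.ncard_pair huv])) Set.ncard_image_le
    _ ≤ domNum G + b + 3 := by omega
end

section
/- Let H be a finite simple graph containing pairwise disjoint sets A_1, A_2, A_3 ⊆ V(H), each inducing a clique in H, together with vertices v_1 ∈ A_1, v_2 ∈ A_2, v_3 ∈ A_3 such that v_1 is non-adjacent to every vertex of A_2, v_2 is non-adjacent to every vertex of A_3, and v_3 is non-adjacent to every vertex of A_1 (a non-adjacent triple of cliques). Then for every graph H' ∈ IIM_1(H) (i.e., for every choice of cloning or anticloning each vertex of H) there exist pairwise disjoint sets B_1, B_2, B_3 ⊆ V(H') such that: (1) A_i ⊆ B_i for each i; (2) each B_i induces a clique in H'; (3) |B_i| = |A_i| + 1 for at least two distinct indices i ∈ {1,2,3}; and (4) B_1, B_2, B_3, taken in some cyclic order, form a non-adjacent triple in H'. -/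
/-- Three pairwise disjoint vertex sets form a *non-adjacent triple* if there are
`v₁ ∈ A₁` non-adjacent to every vertex of `A₂`, `v₂ ∈ A₂` non-adjacent to every vertex
of `A₃`, and `v₃ ∈ A₃` non-adjacent to every vertex of `A₁`. -/
def NonAdjTriple {W : Type} (H : SimpleGraph W) (A₁ A₂ A₃ : Set W) : Prop :=
  (∃ v ∈ A₁, ∀ u ∈ A₂, ¬ H.Adj v u) ∧
  (∃ v ∈ A₂, ∀ u ∈ A₃, ¬ H.Adj v u) ∧
  (∃ v ∈ A₃, ∀ u ∈ A₁, ¬ H.Adj v u)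

/-!
Some two cyclically consecutive witnesses, say `v₁` and `v₂`, receive the same kind of copy.
A clone of `vᵢ` is adjacent to all of the clique `Aᵢ` and inherits the non-adjacencies of `vᵢ`,
so two clones enlarge `A₁` and `A₂`. An anticlone of `vᵢ` is adjacent to all of `Aᵢ₊₁`, which
`vᵢ` does not see, and not to `vᵢ` itself, so two anticlones enlarge `A₂` and `A₃` while the old
witnesses `v₁, v₂, v₃` still work.
-/

lemma Set.ncard_insert_inr_image_inl {α β : Type*} {A : Set α} (b : β)
    (hA : A.Finite := by toFinite_tac) :
    (insert (Sum.inr b) (Sum.inl '' A) : Set (α ⊕ β)).ncard = A.ncard + 1 := by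
  rw [Set.ncard_insert_of_notMem (by simp) (hA.image _),
    Set.ncard_image_of_injective _ Sum.inl_injective]

section iimStep

variable {W : Type} {H : SimpleGraph W} {σ : W → Bool}

lemma iimStep_adj_inl_inr_of_clone_s12 {u v : W} (hv : σ v = true) :
    (iimStep H σ).Adj (Sum.inl u) (Sum.inr v) ↔ u = v ∨ H.Adj u v := by
  simp [iimStep, hv]

lemma iimStep_adj_inl_inr_of_anticlone_s12 {u v : W} (hv : σ v = false) :
    (iimStep H σ).Adj (Sum.inl u) (Sum.inr v) ↔ ¬(u = v ∨ H.Adj u v) := by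
  simp [iimStep, hv]

lemma iimStep_not_adj_inr_inr_s12 {u v : W} : ¬(iimStep H σ).Adj (Sum.inr u) (Sum.inr v) :=
  id

lemma iimStep_not_adj_inl_inr_of_clone {u v : W} (hσ : σ v = true) (huv : u ≠ v)
    (hvu : ¬H.Adj v u) : ¬(iimStep H σ).Adj (Sum.inl u) (Sum.inr v) := by
  rw [iimStep_adj_inl_inr_of_clone_s12 hσ]
  rintro (rfl | huv')
  exacts [huv rfl, hvu huv'.symm]

lemma iimStep_not_adj_inl_inr_self_of_anticlone {v : W} (hσ : σ v = false) :
    ¬(iimStep H σ).Adj (Sum.inl v) (Sum.inr v) := by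
  simp [iimStep_adj_inl_inr_of_anticlone_s12 hσ]

lemma iimStep_isClique_image_inl {A : Set W} (hA : H.IsClique A) :
    (iimStep H σ).IsClique (Sum.inl '' A) := by
  rintro _ ⟨u, hu, rfl⟩ _ ⟨v, hv, rfl⟩ hne
  exact hA hu hv (ne_of_apply_ne _ hne)

lemma iimStep_isClique_insert_inr {A : Set W} (hA : H.IsClique A) {v : W}
    (hvA : ∀ u ∈ A, (iimStep H σ).Adj (Sum.inl u) (Sum.inr v)) :
    (iimStep H σ).IsClique (insert (Sum.inr v) (Sum.inl '' A)) := by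
  refine (iimStep_isClique_image_inl hA).insert ?_
  rintro _ ⟨u, hu, rfl⟩ -
  exact (hvA u hu).symm

lemma iimStep_isClique_insert_clone {A : Set W} (hA : H.IsClique A) {v : W} (hv : v ∈ A)
    (hσ : σ v = true) : (iimStep H σ).IsClique (insert (Sum.inr v) (Sum.inl '' A)) := by
  refine iimStep_isClique_insert_inr hA fun u hu => ?_
  rw [iimStep_adj_inl_inr_of_clone_s12 hσ]
  exact (eq_or_ne u v).imp_right (hA hu hv)

lemma iimStep_isClique_insert_anticlone {A : Set W} (hA : H.IsClique A) {v : W} (hv : v ∉ A)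
    (hvA : ∀ u ∈ A, ¬H.Adj v u) (hσ : σ v = false) :
    (iimStep H σ).IsClique (insert (Sum.inr v) (Sum.inl '' A)) := by
  refine iimStep_isClique_insert_inr hA fun u hu => ?_
  rw [iimStep_adj_inl_inr_of_anticlone_s12 hσ]
  rintro (rfl | huv)
  exacts [hv hu, hvA u hu huv.symm]

end iimStep

section NonAdjCliqueTriple

variable {W : Type} {H : SimpleGraph W} {A₁ A₂ A₃ : Set W} {v₁ v₂ v₃ : W}

structure IsNonAdjCliqueTriple (H : SimpleGraph W) (A₁ A₂ A₃ : Set W) (v₁ v₂ v₃ : W) :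
    Prop where
  disjoint₁₂ : Disjoint A₁ A₂
  disjoint₂₃ : Disjoint A₂ A₃
  disjoint₁₃ : Disjoint A₁ A₃
  isClique₁ : H.IsClique A₁
  isClique₂ : H.IsClique A₂
  isClique₃ : H.IsClique A₃
  mem₁ : v₁ ∈ A₁
  mem₂ : v₂ ∈ A₂
  mem₃ : v₃ ∈ A₃
  not_adj₁₂ : ∀ u ∈ A₂, ¬H.Adj v₁ u
  not_adj₂₃ : ∀ u ∈ A₃, ¬H.Adj v₂ u
  not_adj₃₁ : ∀ u ∈ A₁, ¬H.Adj v₃ u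

lemma IsNonAdjCliqueTriple.rotate (h : IsNonAdjCliqueTriple H A₁ A₂ A₃ v₁ v₂ v₃) :
    IsNonAdjCliqueTriple H A₂ A₃ A₁ v₂ v₃ v₁ :=
  ⟨h.disjoint₂₃, h.disjoint₁₃.symm, h.disjoint₁₂.symm, h.isClique₂, h.isClique₃, h.isClique₁,
    h.mem₂, h.mem₃, h.mem₁, h.not_adj₂₃, h.not_adj₃₁, h.not_adj₁₂⟩

structure IsNonAdjTripleExtension (G : SimpleGraph (W ⊕ W)) (A₁ A₂ A₃ : Set W)
    (B₁ B₂ B₃ : Set (W ⊕ W)) : Prop where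
  disjoint : Disjoint B₁ B₂ ∧ Disjoint B₂ B₃ ∧ Disjoint B₁ B₃
  subset : Sum.inl '' A₁ ⊆ B₁ ∧ Sum.inl '' A₂ ⊆ B₂ ∧ Sum.inl '' A₃ ⊆ B₃
  isClique : G.IsClique B₁ ∧ G.IsClique B₂ ∧ G.IsClique B₃
  ncard_eq :
    (B₁.ncard = A₁.ncard + 1 ∧ B₂.ncard = A₂.ncard + 1) ∨
    (B₂.ncard = A₂.ncard + 1 ∧ B₃.ncard = A₃.ncard + 1) ∨
    (B₁.ncard = A₁.ncard + 1 ∧ B₃.ncard = A₃.ncard + 1)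
  nonAdjTriple : NonAdjTriple G B₁ B₂ B₃

lemma IsNonAdjTripleExtension.rotate {G : SimpleGraph (W ⊕ W)} {B₁ B₂ B₃ : Set (W ⊕ W)}
    (h : IsNonAdjTripleExtension G A₁ A₂ A₃ B₁ B₂ B₃) :
    IsNonAdjTripleExtension G A₂ A₃ A₁ B₂ B₃ B₁ where
  disjoint := ⟨h.disjoint.2.1, h.disjoint.2.2.symm, h.disjoint.1.symm⟩
  subset := ⟨h.subset.2.1, h.subset.2.2, h.subset.1⟩
  isClique := ⟨h.isClique.2.1, h.isClique.2.2, h.isClique.1⟩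
  ncard_eq := by have := h.ncard_eq; tauto
  nonAdjTriple := ⟨h.nonAdjTriple.2.1, h.nonAdjTriple.2.2, h.nonAdjTriple.1⟩

variable [Finite W] {σ : W → Bool}

lemma IsNonAdjCliqueTriple.isNonAdjTripleExtension_clone
    (h : IsNonAdjCliqueTriple H A₁ A₂ A₃ v₁ v₂ v₃) (hσ₁ : σ v₁ = true) (hσ₂ : σ v₂ = true) :
    IsNonAdjTripleExtension (iimStep H σ) A₁ A₂ A₃
      (insert (Sum.inr v₁) (Sum.inl '' A₁)) (insert (Sum.inr v₂) (Sum.inl '' A₂))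
      (Sum.inl '' A₃) where
  disjoint := by
    have hv₂₁ : v₂ ≠ v₁ := (h.disjoint₁₂.ne_of_mem h.mem₁ h.mem₂).symm
    simp [Set.disjoint_image_iff Sum.inl_injective, hv₂₁, h.disjoint₁₂, h.disjoint₂₃,
      h.disjoint₁₃]
  subset := ⟨Set.subset_insert _ _, Set.subset_insert _ _, subset_rfl⟩
  isClique := ⟨iimStep_isClique_insert_clone h.isClique₁ h.mem₁ hσ₁,
    iimStep_isClique_insert_clone h.isClique₂ h.mem₂ hσ₂, iimStep_isClique_image_inl h.isClique₃⟩
  ncard_eq := .inl ⟨Set.ncard_insert_inr_image_inl _, Set.ncard_insert_inr_image_inl _⟩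
  nonAdjTriple := by
    refine ⟨⟨Sum.inr v₁, Set.mem_insert _ _, ?_⟩, ⟨Sum.inr v₂, Set.mem_insert _ _, ?_⟩,
      ⟨Sum.inl v₃, Set.mem_image_of_mem _ h.mem₃, ?_⟩⟩
    · rintro _ (rfl | ⟨u, hu, rfl⟩) hadj
      · exact iimStep_not_adj_inr_inr_s12 hadj
      · exact iimStep_not_adj_inl_inr_of_clone hσ₁ (h.disjoint₁₂.ne_of_mem h.mem₁ hu).symm
          (h.not_adj₁₂ u hu) hadj.symm
    · rintro _ ⟨u, hu, rfl⟩ hadj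
      exact iimStep_not_adj_inl_inr_of_clone hσ₂ (h.disjoint₂₃.ne_of_mem h.mem₂ hu).symm
        (h.not_adj₂₃ u hu) hadj.symm
    · rintro _ (rfl | ⟨u, hu, rfl⟩) hadj
      · exact iimStep_not_adj_inl_inr_of_clone hσ₁ (h.disjoint₁₃.ne_of_mem h.mem₁ h.mem₃).symm
          (fun h' => h.not_adj₃₁ v₁ h.mem₁ h'.symm) hadj
      · exact h.not_adj₃₁ u hu hadj

lemma IsNonAdjCliqueTriple.isNonAdjTripleExtension_anticlone
    (h : IsNonAdjCliqueTriple H A₁ A₂ A₃ v₁ v₂ v₃) (hσ₁ : σ v₁ = false) (hσ₂ : σ v₂ = false) :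
    IsNonAdjTripleExtension (iimStep H σ) A₁ A₂ A₃
      (Sum.inl '' A₁) (insert (Sum.inr v₁) (Sum.inl '' A₂))
      (insert (Sum.inr v₂) (Sum.inl '' A₃)) where
  disjoint := by
    have hv₂₁ : v₂ ≠ v₁ := (h.disjoint₁₂.ne_of_mem h.mem₁ h.mem₂).symm
    simp [Set.disjoint_image_iff Sum.inl_injective, hv₂₁, h.disjoint₁₂, h.disjoint₂₃,
      h.disjoint₁₃]
  subset := ⟨subset_rfl, Set.subset_insert _ _, Set.subset_insert _ _⟩
  isClique := ⟨iimStep_isClique_image_inl h.isClique₁,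
    iimStep_isClique_insert_anticlone h.isClique₂ (h.disjoint₁₂.notMem_of_mem_left h.mem₁)
      h.not_adj₁₂ hσ₁,
    iimStep_isClique_insert_anticlone h.isClique₃ (h.disjoint₂₃.notMem_of_mem_left h.mem₂)
      h.not_adj₂₃ hσ₂⟩
  ncard_eq := .inr (.inl ⟨Set.ncard_insert_inr_image_inl _, Set.ncard_insert_inr_image_inl _⟩)
  nonAdjTriple := by
    refine ⟨⟨Sum.inl v₁, Set.mem_image_of_mem _ h.mem₁, ?_⟩,
      ⟨Sum.inl v₂, Set.mem_insert_of_mem _ (Set.mem_image_of_mem _ h.mem₂), ?_⟩,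
      ⟨Sum.inl v₃, Set.mem_insert_of_mem _ (Set.mem_image_of_mem _ h.mem₃), ?_⟩⟩
    · rintro _ (rfl | ⟨u, hu, rfl⟩)
      exacts [iimStep_not_adj_inl_inr_self_of_anticlone hσ₁, h.not_adj₁₂ u hu]
    · rintro _ (rfl | ⟨u, hu, rfl⟩)
      exacts [iimStep_not_adj_inl_inr_self_of_anticlone hσ₂, h.not_adj₂₃ u hu]
    · rintro _ ⟨u, hu, rfl⟩
      exact h.not_adj₃₁ u hu

lemma IsNonAdjCliqueTriple.exists_isNonAdjTripleExtension
    (h : IsNonAdjCliqueTriple H A₁ A₂ A₃ v₁ v₂ v₃) (hσ : σ v₁ = σ v₂) :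
    ∃ B₁ B₂ B₃, IsNonAdjTripleExtension (iimStep H σ) A₁ A₂ A₃ B₁ B₂ B₃ := by
  cases hσ₁ : σ v₁
  · exact ⟨_, _, _, h.isNonAdjTripleExtension_anticlone hσ₁ (hσ ▸ hσ₁)⟩
  · exact ⟨_, _, _, h.isNonAdjTripleExtension_clone hσ₁ (hσ ▸ hσ₁)⟩

end NonAdjCliqueTriple

/-- If a finite graph `H` contains a non-adjacent triple of cliques
`A₁, A₂, A₃`, then after any single IIM step (any choice of cloning/anticloning each
vertex) there are pairwise disjoint sets `B₁, B₂, B₃` with `Aᵢ ⊆ Bᵢ`, each `Bᵢ` a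
clique, `|Bᵢ| = |Aᵢ| + 1` for at least two indices, and `B₁, B₂, B₃` forming a
non-adjacent triple in some cyclic order. -/
theorem stmt12 {W : Type} [Fintype W] (H : SimpleGraph W)
    (A₁ A₂ A₃ : Set W)
    (hdisj : Disjoint A₁ A₂ ∧ Disjoint A₂ A₃ ∧ Disjoint A₁ A₃)
    (hclique : H.IsClique A₁ ∧ H.IsClique A₂ ∧ H.IsClique A₃)
    (htriple : NonAdjTriple H A₁ A₂ A₃)
    (σ : W → Bool) :
    ∃ B₁ B₂ B₃ : Set (W ⊕ W),
      (Disjoint B₁ B₂ ∧ Disjoint B₂ B₃ ∧ Disjoint B₁ B₃) ∧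
      (Sum.inl '' A₁ ⊆ B₁ ∧ Sum.inl '' A₂ ⊆ B₂ ∧ Sum.inl '' A₃ ⊆ B₃) ∧
      ((iimStep H σ).IsClique B₁ ∧ (iimStep H σ).IsClique B₂ ∧ (iimStep H σ).IsClique B₃) ∧
      ((B₁.ncard = A₁.ncard + 1 ∧ B₂.ncard = A₂.ncard + 1) ∨
       (B₂.ncard = A₂.ncard + 1 ∧ B₃.ncard = A₃.ncard + 1) ∨
       (B₁.ncard = A₁.ncard + 1 ∧ B₃.ncard = A₃.ncard + 1)) ∧
      (NonAdjTriple (iimStep H σ) B₁ B₂ B₃ ∨ NonAdjTriple (iimStep H σ) B₃ B₂ B₁) := by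
  obtain ⟨⟨v₁, hv₁, hn₁₂⟩, ⟨v₂, hv₂, hn₂₃⟩, ⟨v₃, hv₃, hn₃₁⟩⟩ := htriple
  have hA : IsNonAdjCliqueTriple H A₁ A₂ A₃ v₁ v₂ v₃ :=
    ⟨hdisj.1, hdisj.2.1, hdisj.2.2, hclique.1, hclique.2.1, hclique.2.2,
      hv₁, hv₂, hv₃, hn₁₂, hn₂₃, hn₃₁⟩
  have hσ : σ v₁ = σ v₂ ∨ σ v₂ = σ v₃ ∨ σ v₃ = σ v₁ := by
    cases σ v₁ <;> cases σ v₂ <;> cases σ v₃ <;> simp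
  obtain ⟨B₁, B₂, B₃, hB⟩ :
      ∃ B₁ B₂ B₃, IsNonAdjTripleExtension (iimStep H σ) A₁ A₂ A₃ B₁ B₂ B₃ := by
    rcases hσ with hσ | hσ | hσ
    · exact hA.exists_isNonAdjTripleExtension hσ
    · obtain ⟨B₂, B₃, B₁, hB⟩ := hA.rotate.exists_isNonAdjTripleExtension hσ
      exact ⟨B₁, B₂, B₃, hB.rotate.rotate⟩
    · obtain ⟨B₃, B₁, B₂, hB⟩ := hA.rotate.rotate.exists_isNonAdjTripleExtension hσ
      exact ⟨B₁, B₂, B₃, hB.rotate⟩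
  exact ⟨B₁, B₂, B₃, hB.disjoint, hB.subset, hB.isClique, hB.ncard_eq, .inl hB.nonAdjTriple⟩
end

section
/- Let G be a finite simple graph, k ∈ ℕ, H ∈ IIM_k(G), and l < k, and let H_l and H_{l+1} denote the induced subgraphs of H on levels 0 through l and 0 through l+1, respectively. Fix a proper coloring of H_l using exactly c colors under which at least two distinct vertices of H_l each have both a rainbow neighborhood and a rainbow anti-neighborhood. Then: (1) every proper coloring of H_{l+1} whose restriction to V(H_l) equals the fixed coloring uses at least c + 1 colors; and (2) if such a proper coloring of H_{l+1} uses exactly c + 1 colors, then under it at least two distinct vertices of H_{l+1} each have both a rainbow neighborhood and a rainbow anti-neighborhood (with respect to the c + 1 colors). -/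
/-- A proper coloring: adjacent vertices get distinct colors. -/
def ProperColoring {W : Type} (H : SimpleGraph W) (f : W → ℕ) : Prop :=
  ∀ ⦃u v : W⦄, H.Adj u v → f u ≠ f v

/-- `v` has a rainbow neighborhood: every used color appears on some vertex of the
closed neighborhood `N[v]`. -/
def RainbowNbhd {W : Type} (H : SimpleGraph W) (f : W → ℕ) (v : W) : Prop :=
  ∀ c ∈ Set.range f, ∃ u : W, (u = v ∨ H.Adj u v) ∧ f u = c

/-- `v` has a rainbow anti-neighborhood: every used color appears on some vertex
outside the closed neighborhood `N[v]`. -/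
def RainbowAntiNbhd {W : Type} (H : SimpleGraph W) (f : W → ℕ) (v : W) : Prop :=
  ∀ c ∈ Set.range f, ∃ u : W, ¬ (u = v ∨ H.Adj u v) ∧ f u = c

/-
If both `N[u]` and its complement see every color of `f`, the copy of `u` is joined to one of
them, so it needs a color outside the range of `f`. Hence an extension uses at least one new color,
and if it uses exactly one, the copies `v'`, `w'` of the rainbow pair share it. Each copy then
sees every old color both among its neighbors and among its non-neighbors in the old layer, and
the new color on itself and on the other copy, which is not adjacent to it.
-/

theorem Set.eq_insert_of_subset_of_ncard_eq_succ {α : Type*} {s t : Set α} {x : α}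
    (ht : t.Finite) (hst : s ⊆ t) (hxt : x ∈ t) (hxs : x ∉ s) (hcard : t.ncard = s.ncard + 1) :
    t = insert x s :=
  (Set.eq_of_subset_of_ncard_le (Set.insert_subset hxt hst)
    (by rw [Set.ncard_insert_of_notMem hxs (ht.subset hst), hcard]) ht).symm

namespace IIM

variable {W : Type} {H : SimpleGraph W} {τ : W → Bool} {f : W → ℕ} {g : W ⊕ W → ℕ} {u : W}

theorem iimStep_not_adj_inr_inr (a b : W) : ¬(iimStep H τ).Adj (Sum.inr a) (Sum.inr b) :=
  id

theorem iimStep_adj_inl_inr_of_clone (hu : τ u = true) {a : W} :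
    (iimStep H τ).Adj (Sum.inl a) (Sum.inr u) ↔ (a = u ∨ H.Adj a u) := by
  change (if τ u = true then _ else _) ↔ _
  rw [if_pos hu]

theorem iimStep_adj_inl_inr_of_anticlone (hu : τ u = false) {a : W} :
    (iimStep H τ).Adj (Sum.inl a) (Sum.inr u) ↔ ¬(a = u ∨ H.Adj a u) := by
  change (if τ u = true then _ else _) ↔ _
  rw [if_neg (by simp [hu])]

theorem exists_adj_inr_of_rainbow (hN : RainbowNbhd H f u) (hA : RainbowAntiNbhd H f u)
    {e : ℕ} (he : e ∈ Set.range f) :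
    ∃ a, (iimStep H τ).Adj (Sum.inl a) (Sum.inr u) ∧ f a = e := by
  cases hu : τ u
  · obtain ⟨a, ha, rfl⟩ := hA e he
    exact ⟨a, (iimStep_adj_inl_inr_of_anticlone hu).2 ha, rfl⟩
  · obtain ⟨a, ha, rfl⟩ := hN e he
    exact ⟨a, (iimStep_adj_inl_inr_of_clone hu).2 ha, rfl⟩

theorem exists_not_adj_inr_of_rainbow (hN : RainbowNbhd H f u) (hA : RainbowAntiNbhd H f u)
    {e : ℕ} (he : e ∈ Set.range f) :
    ∃ a, ¬(iimStep H τ).Adj (Sum.inl a) (Sum.inr u) ∧ f a = e := by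
  cases hu : τ u
  · obtain ⟨a, ha, rfl⟩ := hN e he
    exact ⟨a, fun h => (iimStep_adj_inl_inr_of_anticlone hu).1 h ha, rfl⟩
  · obtain ⟨a, ha, rfl⟩ := hA e he
    exact ⟨a, mt (iimStep_adj_inl_inr_of_clone hu).1 ha, rfl⟩

theorem color_inr_notMem_range_of_rainbow (hN : RainbowNbhd H f u) (hA : RainbowAntiNbhd H f u)
    (hg : ProperColoring (iimStep H τ) g)
    (hext : ∀ x, g (Sum.inl x) = f x) : g (Sum.inr u) ∉ Set.range f := by
  intro he
  obtain ⟨a, hadj, hfa⟩ := exists_adj_inr_of_rainbow (τ := τ) hN hA he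
  exact hg hadj (by rw [hext, hfa])

theorem rainbow_inr_of_range_eq_insert (hN : RainbowNbhd H f u) (hA : RainbowAntiNbhd H f u)
    (hext : ∀ x, g (Sum.inl x) = f x) {u' : W} (hne : u ≠ u')
    {d : ℕ} (hrange : Set.range g = insert d (Set.range f)) (hu : g (Sum.inr u) = d)
    (hu' : g (Sum.inr u') = d) :
    RainbowNbhd (iimStep H τ) g (Sum.inr u) ∧ RainbowAntiNbhd (iimStep H τ) g (Sum.inr u) := by
  constructor
  · intro e he
    rw [hrange] at he
    obtain rfl | he := he
    · exact ⟨Sum.inr u, Or.inl rfl, hu⟩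
    obtain ⟨a, hadj, rfl⟩ := exists_adj_inr_of_rainbow (τ := τ) hN hA he
    exact ⟨Sum.inl a, Or.inr hadj, hext a⟩
  · intro e he
    rw [hrange] at he
    obtain rfl | he := he
    · refine ⟨Sum.inr u', ?_, hu'⟩
      rintro (h | h)
      · exact hne (Sum.inr_injective h).symm
      · exact iimStep_not_adj_inr_inr _ _ h
    obtain ⟨a, hadj, rfl⟩ := exists_not_adj_inr_of_rainbow (τ := τ) hN hA he
    exact ⟨Sum.inl a, not_or.2 ⟨Sum.inl_ne_inr, hadj⟩, hext a⟩

theorem range_subset_range_of_extends (hext : ∀ x, g (Sum.inl x) = f x) :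
    Set.range f ⊆ Set.range g := by
  rintro e ⟨x, rfl⟩
  exact ⟨Sum.inl x, hext x⟩

end IIM

open IIM in
theorem stmt16_general {V : Type} [Fintype V] (G : SimpleGraph V)
    (l : ℕ) (σ : ∀ i, IterV V i → Bool)
    (c : ℕ) (f : IterV V l → ℕ)
    (hc : (Set.range f).ncard = c)
    (hpair : ∃ v w : IterV V l, v ≠ w ∧
      RainbowNbhd (iimGraph G σ l) f v ∧ RainbowAntiNbhd (iimGraph G σ l) f v ∧
      RainbowNbhd (iimGraph G σ l) f w ∧ RainbowAntiNbhd (iimGraph G σ l) f w)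
    (g : IterV V (l + 1) → ℕ)
    (hg : ProperColoring (iimGraph G σ (l + 1)) g)
    (hext : ∀ x : IterV V l, g (Sum.inl x) = f x) :
    c + 1 ≤ (Set.range g).ncard ∧
    ((Set.range g).ncard = c + 1 →
      ∃ v w : IterV V (l + 1), v ≠ w ∧
        RainbowNbhd (iimGraph G σ (l + 1)) g v ∧
          RainbowAntiNbhd (iimGraph G σ (l + 1)) g v ∧
        RainbowNbhd (iimGraph G σ (l + 1)) g w ∧
          RainbowAntiNbhd (iimGraph G σ (l + 1)) g w) := by
  obtain ⟨v, w, hvw, hvN, hvA, hwN, hwA⟩ := hpair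
  subst hc
  have hsub := range_subset_range_of_extends hext
  have hv_new := color_inr_notMem_range_of_rainbow hvN hvA hg hext
  have hw_new := color_inr_notMem_range_of_rainbow hwN hwA hg hext
  refine ⟨Set.ncard_lt_ncard ((Set.ssubset_iff_of_subset hsub).2 ⟨_, ⟨_, rfl⟩, hv_new⟩)
    (Set.finite_range g), fun hcard => ?_⟩
  have hrange : Set.range g = insert (g (Sum.inr v)) (Set.range f) :=
    Set.eq_insert_of_subset_of_ncard_eq_succ (Set.finite_range g) hsub ⟨_, rfl⟩ hv_new hcard
  have hwv : g (Sum.inr w) = g (Sum.inr v) := by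
    have hw : g (Sum.inr w) ∈ Set.range g := ⟨_, rfl⟩
    rw [hrange] at hw
    exact hw.resolve_right hw_new
  obtain ⟨hvN', hvA'⟩ :=
    rainbow_inr_of_range_eq_insert (τ := σ l) hvN hvA hext hvw hrange rfl hwv
  obtain ⟨hwN', hwA'⟩ :=
    rainbow_inr_of_range_eq_insert (τ := σ l) hwN hwA hext hvw.symm hrange hwv rfl
  exact ⟨Sum.inr v, Sum.inr w, Sum.inr_injective.ne hvw, hvN', hvA', hwN', hwA'⟩

/-- Let `H ∈ IIM_k(G)`, `l < k`, and write `H_l`, `H_{l+1}` for the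
induced subgraphs on levels `0 … l` and `0 … l+1` (i.e. the IIM graphs after `l` and
`l + 1` steps).  Fix a proper coloring of `H_l` with exactly `c` colors having a
rainbow pair.  Then (1) every proper coloring of `H_{l+1}` extending it uses at least
`c + 1` colors, and (2) if it uses exactly `c + 1` colors it again has a rainbow pair. -/
theorem stmt16 {V : Type} [Fintype V] (G : SimpleGraph V)
    (k l : ℕ) (hlk : l < k) (σ : ∀ i, IterV V i → Bool)
    (c : ℕ) (f : IterV V l → ℕ)
    (hf : ProperColoring (iimGraph G σ l) f)
    (hc : (Set.range f).ncard = c)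
    (hpair : ∃ v w : IterV V l, v ≠ w ∧
      RainbowNbhd (iimGraph G σ l) f v ∧ RainbowAntiNbhd (iimGraph G σ l) f v ∧
      RainbowNbhd (iimGraph G σ l) f w ∧ RainbowAntiNbhd (iimGraph G σ l) f w)
    (g : IterV V (l + 1) → ℕ)
    (hg : ProperColoring (iimGraph G σ (l + 1)) g)
    (hext : ∀ x : IterV V l, g (Sum.inl x) = f x) :
    c + 1 ≤ (Set.range g).ncard ∧
    ((Set.range g).ncard = c + 1 →
      ∃ v w : IterV V (l + 1), v ≠ w ∧
        RainbowNbhd (iimGraph G σ (l + 1)) g v ∧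
          RainbowAntiNbhd (iimGraph G σ (l + 1)) g v ∧
        RainbowNbhd (iimGraph G σ (l + 1)) g w ∧
          RainbowAntiNbhd (iimGraph G σ (l + 1)) g w) :=
  stmt16_general G l σ c f hc hpair g hg hext
end
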